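/- (Lemma 1, part 2) Suppose (t*, λ*) with λ* ≥ 0 maximizes k(t,λ) := (Δ+1)λmin(D(t,λ)) − t − λc over t ∈ ℝ, λ ≥ 0. If λmin(D(t*,λ*)) < λmin(A), then every nonzero eigenvector of D(t*,λ*) corresponding to λmin(D(t*,λ*)) has nonzero first component; otherwise (λmin(D(t*,λ*)) = λmin(A)) there exists a basis of the eigenspace of λmin(D(t*,λ*)) such that exactly one basis vector has nonzero first component and all other basis vectors have zero first component. -/

import Mathlib

open Matrix

/-- The smallest eigenvalue of a real (symmetric) matrix. -/
noncomputable def lambdaMin {ι : Type} [Fintype ι] (M : Matrix ι ι ℝ) : ℝ :=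
  sInf {μ : ℝ | ∃ v : ι → ℝ, v ≠ 0 ∧ M.mulVec v = μ • v}

/-- The multiplicity of the smallest eigenvalue: the dimension of Null(M - λmin(M)·I). -/
noncomputable def eigMult {ι : Type} [Fintype ι] [DecidableEq ι] (M : Matrix ι ι ℝ) : ℕ :=
  Module.finrank ℝ (LinearMap.ker (M - lambdaMin M • (1 : Matrix ι ι ℝ)).mulVecLin)

/-- The bordered matrix D(t) = [[t, -aᵀ],[-a, A]]. -/
noncomputable def borderD {n : ℕ} (A : Matrix (Fin n) (Fin n) ℝ) (a : Fin n → ℝ) (t : ℝ) :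
    Matrix (Unit ⊕ Fin n) (Unit ⊕ Fin n) ℝ :=
  Matrix.fromBlocks (Matrix.of fun (_ : Unit) (_ : Unit) => t)
    (Matrix.of fun (_ : Unit) (j : Fin n) => -a j)
    (Matrix.of fun (i : Fin n) (_ : Unit) => -a i) A

/-- The bordered matrix D(t,λ) = [[t, (-a + (λ/2)b)ᵀ],[-a + (λ/2)b, A]]. -/
noncomputable def borderD2 {n : ℕ} (A : Matrix (Fin n) (Fin n) ℝ) (a b : Fin n → ℝ)
    (t l : ℝ) : Matrix (Unit ⊕ Fin n) (Unit ⊕ Fin n) ℝ :=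
  borderD A (fun j => a j - (l / 2) * b j) t

/-- The objective xᵀAx - 2aᵀx. -/
noncomputable def objQ {n : ℕ} (A : Matrix (Fin n) (Fin n) ℝ) (a : Fin n → ℝ)
    (x : Fin n → ℝ) : ℝ :=
  x ⬝ᵥ A.mulVec x - 2 * (a ⬝ᵥ x)

/-- The optimal value p* of eTRS. -/
noncomputable def pstar {n : ℕ} (A : Matrix (Fin n) (Fin n) ℝ) (a b : Fin n → ℝ)
    (c Δ : ℝ) : ℝ :=
  sInf {v : ℝ | ∃ x : Fin n → ℝ, x ⬝ᵥ x ≤ Δ ∧ b ⬝ᵥ x ≤ c ∧ v = objQ A a x}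

/-- The Lagrangian of eTRS. -/
noncomputable def lagr {n : ℕ} (A : Matrix (Fin n) (Fin n) ℝ) (a b : Fin n → ℝ)
    (c Δ : ℝ) (x : Fin n → ℝ) (l1 l2 : ℝ) : ℝ :=
  objQ A a x + l1 * (x ⬝ᵥ x - Δ) + l2 * (b ⬝ᵥ x - c)

/-- The Lagrangian dual value d* of eTRS:
the supremum over λ1, λ2 ≥ 0 of inf_x of the Lagrangian, encoded as the supremum of all
values that are lower bounds of the Lagrangian for some admissible multipliers. -/
noncomputable def dstar {n : ℕ} (A : Matrix (Fin n) (Fin n) ℝ) (a b : Fin n → ℝ)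
    (c Δ : ℝ) : ℝ :=
  sSup {v : ℝ | ∃ l1 l2 : ℝ, 0 ≤ l1 ∧ 0 ≤ l2 ∧ ∀ x : Fin n → ℝ, v ≤ lagr A a b c Δ x l1 l2}

/-- x is a global optimal solution of eTRS. -/
def isOptimal {n : ℕ} (A : Matrix (Fin n) (Fin n) ℝ) (a b : Fin n → ℝ)
    (c Δ : ℝ) (x : Fin n → ℝ) : Prop :=
  x ⬝ᵥ x ≤ Δ ∧ b ⬝ᵥ x ≤ c ∧
    ∀ y : Fin n → ℝ, y ⬝ᵥ y ≤ Δ → b ⬝ᵥ y ≤ c → objQ A a x ≤ objQ A a y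

/-- The dual objective k(t,λ) = (Δ+1)·λmin(D(t,λ)) - t - λc. -/
noncomputable def ktl {n : ℕ} (A : Matrix (Fin n) (Fin n) ℝ) (a b : Fin n → ℝ)
    (c Δ : ℝ) (t l : ℝ) : ℝ :=
  (Δ + 1) * lambdaMin (borderD2 A a b t l) - t - l * c

/-!
Part one is immediate: an eigenvector of `D(t*, λ*)` with vanishing first component restricts
to an eigenvector of `A` with the same eigenvalue.

For part two, suppose every eigenvector of `D = D(t*, λ*)` for `μ = λmin(D)` had vanishing first
component, i.e. `e₀` is orthogonal to the bottom eigenspace. Expanding in an orthonormal eigenbasis,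
Cauchy–Schwarz and the spectral gap `δ > 0` above `μ` give `wᵀ D w ≥ μ |w|² + δ w₀²`, so
`λmin(D(t* - δ, λ*)) = λmin(D - δ e₀ e₀ᵀ) ≥ μ` and `k(t* - δ, λ*) ≥ k(t*, λ*) + δ`, contradicting
maximality. An eigenvector `z` with `z₀ ≠ 0`, followed by a basis of the eigenvectors with
vanishing first component, is then the required basis.
-/

theorem Finite.exists_pos_forall_le_of_pos {ι : Type*} [Finite ι] (f : ι → ℝ) :
    ∃ δ > 0, ∀ i, 0 < f i → δ ≤ f i := by
  rcases isEmpty_or_nonempty ι with hι | hι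
  · exact ⟨1, one_pos, fun i => isEmptyElim i⟩
  set g : ι → ℝ := fun i => if 0 < f i then f i else 1
  have hg : ∀ i, 0 < g i := fun i => by by_cases h : 0 < f i <;> simp [g, h]
  obtain ⟨i₀, hi₀⟩ := Finite.exists_min g
  exact ⟨g i₀, hg i₀, fun i hi => by simpa [g, hi] using hi₀ i⟩

theorem mul_sq_sum_mul_le_sum_mul_sq {ι : Type*} [Fintype ι] {u c g : ι → ℝ} {δ : ℝ}
    (hδ : 0 ≤ δ) (hu : ∑ i, u i ^ 2 ≤ 1) (hg : ∀ i, 0 ≤ g i) (hδg : ∀ i, u i ≠ 0 → δ ≤ g i) :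
    δ * (∑ i, u i * c i) ^ 2 ≤ ∑ i, g i * c i ^ 2 := by
  -- Cauchy–Schwarz, after discarding the coordinates of `c` that `u` does not see
  set d : ι → ℝ := fun i => if u i = 0 then 0 else c i
  have hud : ∀ i, u i * c i = u i * d i := fun i => by by_cases h : u i = 0 <;> simp [d, h]
  have hdc : ∀ i, δ * d i ^ 2 ≤ g i * c i ^ 2 := fun i => by
    by_cases h : u i = 0
    · simpa [d, h] using mul_nonneg (hg i) (sq_nonneg (c i))
    · simpa [d, h] using mul_le_mul_of_nonneg_right (hδg i h) (sq_nonneg (c i))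
  calc δ * (∑ i, u i * c i) ^ 2 = δ * (∑ i, u i * d i) ^ 2 := by simp_rw [hud]
    _ ≤ δ * ((∑ i, u i ^ 2) * ∑ i, d i ^ 2) := by
      gcongr; exact Finset.sum_mul_sq_le_sq_mul_sq _ _ _
    _ ≤ δ * ∑ i, d i ^ 2 := by
      gcongr; exact mul_le_of_le_one_left (Finset.sum_nonneg fun i _ => sq_nonneg _) hu
    _ = ∑ i, δ * d i ^ 2 := Finset.mul_sum _ _ _
    _ ≤ ∑ i, g i * c i ^ 2 := Finset.sum_le_sum fun i _ => hdc i

theorem Matrix.isHermitian_single {ι : Type*} [DecidableEq ι] (j : ι) (δ : ℝ) :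
    (single j j δ).IsHermitian := by
  simp [IsHermitian]

theorem Matrix.mulVec_inr_eq_smul_of_fromBlocks {l m α : Type*} [Fintype l] [Fintype m]
    [Semiring α] {P : Matrix l l α} {Q : Matrix l m α} {R : Matrix m l α} {S : Matrix m m α}
    {μ : α} {y : l ⊕ m → α} (hy : fromBlocks P Q R S *ᵥ y = μ • y) (hyl : y ∘ Sum.inl = 0) :
    S *ᵥ (y ∘ Sum.inr) = μ • (y ∘ Sum.inr) := by
  simpa [fromBlocks_mulVec, hyl, Pi.smul_comp] using congrArg (· ∘ Sum.inr) hy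

theorem exists_linearIndependent_span_eq_of_apply_ne_zero {K V : Type*} [Field K]
    [AddCommGroup V] [Module K V] (W : Submodule K V) [FiniteDimensional K W] (φ : V →ₗ[K] K)
    {z : V} (hzW : z ∈ W) (hz : φ z ≠ 0) :
    ∃ (k : ℕ) (f : Fin k → V), LinearIndependent K f ∧ Submodule.span K (Set.range f) = W ∧
      ∃ i₀, φ (f i₀) ≠ 0 ∧ ∀ i, i ≠ i₀ → φ (f i) = 0 := by
  set W₀ := W ⊓ LinearMap.ker φ
  set g := Module.finBasis K W₀
  have hg : Submodule.span K (Set.range (W₀.subtype ∘ g)) = W₀ := by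
    rw [Set.range_comp, Submodule.span_image, g.span_eq, Submodule.map_subtype_top]
  have hW : W = K ∙ z ⊔ W₀ := by
    refine le_antisymm (fun w hw => ?_) (sup_le ((Submodule.span_singleton_le_iff_mem _ _).2 hzW)
      inf_le_left)
    refine Submodule.mem_sup.2 ⟨(φ w / φ z) • z,
      Submodule.smul_mem _ _ (Submodule.mem_span_singleton_self z), w - (φ w / φ z) • z,
      ⟨W.sub_mem hw (W.smul_mem _ hzW), ?_⟩, add_sub_cancel _ _⟩
    simp [LinearMap.mem_ker, hz]
  refine ⟨_, Fin.cons z (W₀.subtype ∘ g), ?_, ?_, 0, by simpa using hz, fun i hi => ?_⟩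
  · refine linearIndependent_finCons.2 ⟨g.linearIndependent.map' _ W₀.ker_subtype, ?_⟩
    rw [hg]
    exact fun h => hz h.2
  · rw [Fin.range_cons, Submodule.span_insert, hg, ← hW]
  · obtain ⟨j, rfl⟩ := Fin.exists_succ_eq.2 hi
    exact (g j).2.2

section RealSpectrum

variable {ι : Type} [Fintype ι] [DecidableEq ι]

theorem setOf_exists_mulVec_eq_smul_eq_spectrum (M : Matrix ι ι ℝ) :
    {μ : ℝ | ∃ v : ι → ℝ, v ≠ 0 ∧ M *ᵥ v = μ • v} = spectrum ℝ M := by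
  ext μ
  rw [← spectrum_toLin', ← Module.End.hasEigenvalue_iff_mem_spectrum]
  constructor
  · rintro ⟨v, hv, hMv⟩
    exact Module.End.hasEigenvalue_of_hasEigenvector
      ⟨Module.End.mem_eigenspace_iff.mpr (by simpa using hMv), hv⟩
  · intro h
    obtain ⟨v, hv, hv0⟩ := h.exists_hasEigenvector
    exact ⟨v, hv0, by simpa using Module.End.mem_eigenspace_iff.mp hv⟩

theorem lambdaMin_eq_sInf_spectrum (M : Matrix ι ι ℝ) : lambdaMin M = sInf (spectrum ℝ M) := by
  rw [lambdaMin, setOf_exists_mulVec_eq_smul_eq_spectrum]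

theorem lambdaMin_le_of_mulVec_eq_smul {M : Matrix ι ι ℝ} {μ : ℝ} {v : ι → ℝ} (hv : v ≠ 0)
    (hMv : M *ᵥ v = μ • v) : lambdaMin M ≤ μ := by
  rw [lambdaMin_eq_sInf_spectrum]
  refine csInf_le M.finite_real_spectrum.bddBelow ?_
  rw [← setOf_exists_mulVec_eq_smul_eq_spectrum]
  exact ⟨v, hv, hMv⟩

namespace Matrix.IsHermitian

variable {M : Matrix ι ι ℝ} (hM : M.IsHermitian)
include hM

theorem lambdaMin_mem_spectrum [Nonempty ι] : lambdaMin M ∈ spectrum ℝ M := by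
  rw [lambdaMin_eq_sInf_spectrum]
  refine Set.Nonempty.csInf_mem ?_ M.finite_real_spectrum
  rw [hM.spectrum_real_eq_range_eigenvalues]
  exact Set.range_nonempty _

theorem exists_mulVec_eq_lambdaMin_smul [Nonempty ι] :
    ∃ v : ι → ℝ, v ≠ 0 ∧ M *ᵥ v = lambdaMin M • v := by
  have h := hM.lambdaMin_mem_spectrum
  rwa [← setOf_exists_mulVec_eq_smul_eq_spectrum] at h

theorem lambdaMin_le_eigenvalues (i : ι) : lambdaMin M ≤ hM.eigenvalues i :=
  lambdaMin_le_of_mulVec_eq_smul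
    ((WithLp.ofLp_eq_zero 2).ne.2 <| hM.eigenvectorBasis.orthonormal.ne_zero i)
    (hM.mulVec_eigenvectorBasis i)

theorem le_lambdaMin_of_forall_le_dotProduct_mulVec [Nonempty ι] {μ : ℝ}
    (h : ∀ w : ι → ℝ, μ * (w ⬝ᵥ w) ≤ w ⬝ᵥ (M *ᵥ w)) : μ ≤ lambdaMin M := by
  obtain ⟨v, hv, hMv⟩ := hM.exists_mulVec_eq_lambdaMin_smul
  have hpos : 0 < v ⬝ᵥ v := by simpa using dotProduct_star_self_pos_iff.mpr hv
  have := h v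
  rw [hMv, dotProduct_smul, smul_eq_mul] at this
  exact le_of_mul_le_mul_right this hpos

theorem eigenvectorUnitary_mul_transpose :
    (hM.eigenvectorUnitary : Matrix ι ι ℝ) * (hM.eigenvectorUnitary : Matrix ι ι ℝ)ᵀ = 1 := by
  simpa [star_eq_conjTranspose, conjTranspose_eq_transpose_of_trivial] using
    Unitary.coe_mul_star_self hM.eigenvectorUnitary

theorem eq_eigenvectorUnitary_mul_diagonal_mul_transpose :
    M = (hM.eigenvectorUnitary : Matrix ι ι ℝ) * diagonal hM.eigenvalues *
      (hM.eigenvectorUnitary : Matrix ι ι ℝ)ᵀ := by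
  conv_lhs => rw [hM.spectral_theorem]
  simp [star_eq_conjTranspose, conjTranspose_eq_transpose_of_trivial]

theorem dotProduct_mulVec_eq_sum_eigenvalues_mul_sq (w : ι → ℝ) :
    w ⬝ᵥ (M *ᵥ w) =
      ∑ i, hM.eigenvalues i * ((hM.eigenvectorUnitary : Matrix ι ι ℝ)ᵀ *ᵥ w) i ^ 2 := by
  conv_lhs => rw [hM.eq_eigenvectorUnitary_mul_diagonal_mul_transpose]
  rw [← mulVec_mulVec, ← mulVec_mulVec, dotProduct_mulVec, ← mulVec_transpose]
  simp [dotProduct, mulVec_diagonal, sq, mul_left_comm]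

end Matrix.IsHermitian

section Orthogonal

variable {U : Matrix ι ι ℝ} (hU : U * Uᵀ = 1)
include hU

theorem mulVec_transpose_mulVec_of_mul_transpose_eq_one (w : ι → ℝ) : U *ᵥ (Uᵀ *ᵥ w) = w := by
  rw [mulVec_mulVec, hU, one_mulVec]

theorem dotProduct_transpose_mulVec_self_of_mul_transpose_eq_one (w : ι → ℝ) :
    (Uᵀ *ᵥ w) ⬝ᵥ (Uᵀ *ᵥ w) = w ⬝ᵥ w := by
  rw [dotProduct_mulVec, vecMul_transpose, mulVec_transpose_mulVec_of_mul_transpose_eq_one hU]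

theorem sum_sq_apply_of_mul_transpose_eq_one (j : ι) : ∑ i, U j i ^ 2 = 1 := by
  simpa [mul_apply, sq] using congrFun (congrFun hU j) j

end Orthogonal

theorem dotProduct_sub_single_mulVec (M : Matrix ι ι ℝ) (j : ι) (δ : ℝ) (w : ι → ℝ) :
    w ⬝ᵥ ((M - single j j δ) *ᵥ w) = w ⬝ᵥ (M *ᵥ w) - δ * w j ^ 2 := by
  rw [sub_mulVec, single_mulVec_eq, dotProduct_sub, dotProduct_smul, dotProduct_single, mul_one,
    smul_eq_mul]
  ring

theorem Matrix.IsHermitian.exists_pos_lambdaMin_le_lambdaMin_sub_single {M : Matrix ι ι ℝ}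
    (hM : M.IsHermitian) (j : ι) (hj : ∀ v : ι → ℝ, M *ᵥ v = lambdaMin M • v → v j = 0) :
    ∃ δ > 0, lambdaMin M ≤ lambdaMin (M - single j j δ) := by
  have : Nonempty ι := ⟨j⟩
  set μ := lambdaMin M
  set U : Matrix ι ι ℝ := ↑hM.eigenvectorUnitary
  have hU : U * Uᵀ = 1 := hM.eigenvectorUnitary_mul_transpose
  have hgap : ∀ i, U j i ≠ 0 → 0 < hM.eigenvalues i - μ := fun i hi =>
    sub_pos.2 <| (hM.lambdaMin_le_eigenvalues i).lt_of_ne fun h =>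
      hi <| (hM.eigenvectorUnitary_apply j i).trans <|
        hj _ (by rw [hM.mulVec_eigenvectorBasis, ← h])
  obtain ⟨δ, hδ, hδle⟩ := Finite.exists_pos_forall_le_of_pos fun i => hM.eigenvalues i - μ
  refine ⟨δ, hδ, (hM.sub (isHermitian_single j δ)).le_lambdaMin_of_forall_le_dotProduct_mulVec
    fun w => ?_⟩
  set c := Uᵀ *ᵥ w
  have hwj : w j = ∑ i, U j i * c i := by
    conv_lhs => rw [← mulVec_transpose_mulVec_of_mul_transpose_eq_one hU w]
    rfl
  have hexcess : w ⬝ᵥ (M *ᵥ w) - μ * (w ⬝ᵥ w) = ∑ i, (hM.eigenvalues i - μ) * c i ^ 2 := by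
    rw [hM.dotProduct_mulVec_eq_sum_eigenvalues_mul_sq,
      ← dotProduct_transpose_mulVec_self_of_mul_transpose_eq_one hU]
    simp only [dotProduct, Finset.mul_sum, sub_mul, Finset.sum_sub_distrib, sq]
    rfl
  have hbound : δ * w j ^ 2 ≤ ∑ i, (hM.eigenvalues i - μ) * c i ^ 2 := by
    rw [hwj]
    exact mul_sq_sum_mul_le_sum_mul_sq hδ.le (sum_sq_apply_of_mul_transpose_eq_one hU j).le
      (fun i => sub_nonneg.2 (hM.lambdaMin_le_eigenvalues i)) fun i hi => hδle i (hgap i hi)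
  rw [dotProduct_sub_single_mulVec]
  linarith

end RealSpectrum

section Bordered

variable {n : ℕ} {A : Matrix (Fin n) (Fin n) ℝ}

theorem borderD_isHermitian (hA : A.IsHermitian) (a : Fin n → ℝ) (t : ℝ) :
    (borderD A a t).IsHermitian :=
  IsHermitian.fromBlocks (by ext; simp) (by ext; simp) hA

theorem borderD_sub (A : Matrix (Fin n) (Fin n) ℝ) (a : Fin n → ℝ) (t δ : ℝ) :
    borderD A a (t - δ) = borderD A a t - single (Sum.inl ()) (Sum.inl ()) δ := by
  ext (_ | i) (_ | j) <;> simp [borderD, single]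

theorem lambdaMin_le_of_borderD_mulVec_eq_smul {a : Fin n → ℝ} {t μ : ℝ}
    {y : Unit ⊕ Fin n → ℝ} (hy : y ≠ 0) (hy₀ : y (Sum.inl ()) = 0)
    (hDy : borderD A a t *ᵥ y = μ • y) : lambdaMin A ≤ μ := by
  refine lambdaMin_le_of_mulVec_eq_smul (fun h => hy ?_)
    (mulVec_inr_eq_smul_of_fromBlocks hDy (funext fun _ => hy₀))
  ext (_ | i)
  exacts [hy₀, congrFun h i]

theorem exists_borderD2_eigenvector_inl_ne_zero (hA : A.IsHermitian) {a b : Fin n → ℝ}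
    {c Δ ts ls : ℝ} (hΔ : 0 ≤ Δ + 1) (hmax : ∀ t, ktl A a b c Δ t ls ≤ ktl A a b c Δ ts ls) :
    ∃ z, borderD2 A a b ts ls *ᵥ z = lambdaMin (borderD2 A a b ts ls) • z ∧
      z (Sum.inl ()) ≠ 0 := by
  by_contra! h
  obtain ⟨δ, hδ, hle⟩ :=
    (borderD_isHermitian hA _ ts).exists_pos_lambdaMin_le_lambdaMin_sub_single (Sum.inl ()) h
  have hk := hmax (ts - δ)
  rw [ktl, ktl, borderD2, borderD2, borderD_sub] at hk
  linarith [mul_le_mul_of_nonneg_left hle hΔ]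

end Bordered

theorem stmt9_general {n : ℕ} (A : Matrix (Fin n) (Fin n) ℝ) (hA : A.IsHermitian)
    (a b : Fin n → ℝ) (c Δ : ℝ) (hΔ : 0 < Δ)
    (ts ls : ℝ) (hls : 0 ≤ ls)
    (hmax : ∀ t l : ℝ, 0 ≤ l → ktl A a b c Δ t l ≤ ktl A a b c Δ ts ls) :
    (lambdaMin (borderD2 A a b ts ls) < lambdaMin A →
      ∀ y : Unit ⊕ Fin n → ℝ, y ≠ 0 →
        (borderD2 A a b ts ls).mulVec y = lambdaMin (borderD2 A a b ts ls) • y →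
        y (Sum.inl ()) ≠ 0) ∧
    (lambdaMin (borderD2 A a b ts ls) = lambdaMin A →
      ∃ (k : ℕ) (f : Fin k → (Unit ⊕ Fin n → ℝ)),
        LinearIndependent ℝ f ∧
        Submodule.span ℝ (Set.range f) =
          LinearMap.ker ((borderD2 A a b ts ls - lambdaMin (borderD2 A a b ts ls) •
            (1 : Matrix (Unit ⊕ Fin n) (Unit ⊕ Fin n) ℝ)).mulVecLin) ∧
        ∃ i0 : Fin k, f i0 (Sum.inl ()) ≠ 0 ∧
          ∀ i : Fin k, i ≠ i0 → f i (Sum.inl ()) = 0) := by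
  refine ⟨fun hlt y hy hDy hy₀ => (lambdaMin_le_of_borderD_mulVec_eq_smul hy hy₀ hDy).not_gt hlt,
    fun _ => ?_⟩
  obtain ⟨z, hDz, hz⟩ :=
    exists_borderD2_eigenvector_inl_ne_zero hA (by linarith) fun t => hmax t ls hls
  exact exists_linearIndependent_span_eq_of_apply_ne_zero _
    (LinearMap.proj (R := ℝ) (φ := fun _ => ℝ) (Sum.inl ())) (by simp [hDz]) hz

/-- Lemma 1, part 2. -/
theorem stmt9 {n : ℕ} (hn : 1 ≤ n) (A : Matrix (Fin n) (Fin n) ℝ) (hA : A.IsHermitian)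
    (hnpd : ¬ A.PosDef) (a b : Fin n → ℝ) (c Δ : ℝ) (hΔ : 0 < Δ)
    (ts ls : ℝ) (hls : 0 ≤ ls)
    (hmax : ∀ t l : ℝ, 0 ≤ l → ktl A a b c Δ t l ≤ ktl A a b c Δ ts ls) :
    (lambdaMin (borderD2 A a b ts ls) < lambdaMin A →
      ∀ y : Unit ⊕ Fin n → ℝ, y ≠ 0 →
        (borderD2 A a b ts ls).mulVec y = lambdaMin (borderD2 A a b ts ls) • y →
        y (Sum.inl ()) ≠ 0) ∧
    (lambdaMin (borderD2 A a b ts ls) = lambdaMin A →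
      ∃ (k : ℕ) (f : Fin k → (Unit ⊕ Fin n → ℝ)),
        LinearIndependent ℝ f ∧
        Submodule.span ℝ (Set.range f) =
          LinearMap.ker ((borderD2 A a b ts ls - lambdaMin (borderD2 A a b ts ls) •
            (1 : Matrix (Unit ⊕ Fin n) (Unit ⊕ Fin n) ℝ)).mulVecLin) ∧
        ∃ i0 : Fin k, f i0 (Sum.inl ()) ≠ 0 ∧
          ∀ i : Fin k, i ≠ i0 → f i (Sum.inl ()) = 0) :=
  stmt9_general A hA a b c Δ hΔ ts ls hls hmax
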